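/- arXiv:1906.00457 — 8 statements merged into one kernel-verified Lean document; each statement's English description precedes it below -/
import Mathlib

section
/- Let A = (a^i_j) be a matrix over k with rows and columns indexed by I(n,r). Then A commutes with the matrix I_n^{⊗(α-1)} ⊗ J_n ⊗ I_n^{⊗(r-α)} for every α = 1,…,r if and only if for each place α = 1,…,r and all p = i_1⋯i_{α-1}i_{α+1}⋯i_r and q = j_1⋯j_{α-1}j_{α+1}⋯j_r in I(n,r-1) there is a scalar b^p_q(α) ∈ k such that Σ_{i=1}^n a^{i_1⋯i_{α-1} i i_{α+1}⋯i_r}_{j_1⋯j_{α-1} j j_{α+1}⋯j_r} = b^p_q(α) for every j = 1,…,n, and Σ_{j=1}^n a^{i_1⋯i_{α-1} i i_{α+1}⋯i_r}_{j_1⋯j_{α-1} j j_{α+1}⋯j_r} = b^p_q(α) for every i = 1,…,n. -/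
/-!
The entry `p_α i j` is `1` when `i` and `j` agree off the place `α` and `0` otherwise, so
`(A p_α) i j` sums `A i` over the `α`-slice through `j`, and `(p_α A) i j` sums `A · j` over
the `α`-slice through `i`. Thus `A` commutes with `p_α` iff, for all `p, q` off `α`, every
row sum of the `n × n` block `(x, y) ↦ A (α.insertNth x p) (α.insertNth y q)` equals every
column sum, i.e. all of them equal one scalar `b`.
-/

open Finset

/-- The matrix `I_n^{⊗(α-1)} ⊗ J_n ⊗ I_n^{⊗(r-α)}` of the partition-algebra
generator `p_α` acting on `(k^n)^{⊗r}`: its `(i,j)`-entry is the product over all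
places `β` of the `(i β, j β)`-entry of the `β`-th Kronecker factor. -/
def pMat (k : Type*) [CommRing k] (n r : ℕ) (α : Fin r) :
    Matrix (Fin r → Fin n) (Fin r → Fin n) k :=
  Matrix.of fun i j => ∏ β : Fin r, if β = α then 1 else if i β = j β then 1 else 0

theorem forall_sum_row_eq_sum_col_iff {ι κ M : Type*} [Fintype ι] [Fintype κ]
    [Nonempty ι] [Nonempty κ] [AddCommMonoid M] (f : ι → κ → M) :
    (∀ x y, ∑ y', f x y' = ∑ x', f x' y) ↔
      ∃ b, (∀ y, ∑ x, f x y = b) ∧ (∀ x, ∑ y, f x y = b) := by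
  constructor
  · intro h
    obtain ⟨x₀⟩ := ‹Nonempty ι›
    obtain ⟨y₀⟩ := ‹Nonempty κ›
    refine ⟨∑ y, f x₀ y, fun y => (h x₀ y).symm, fun x => ?_⟩
    rw [h x y₀, ← h x₀ y₀]
  · rintro ⟨b, hcol, hrow⟩ x y
    rw [hrow x, hcol y]

section pMat

variable {k : Type*} [CommRing k] {n r : ℕ}
  (A : Matrix (Fin (r + 1) → Fin n) (Fin (r + 1) → Fin n) k)

theorem pMat_apply (α : Fin (r + 1)) (i j : Fin (r + 1) → Fin n) :
    pMat k n (r + 1) α i j = if α.removeNth i = α.removeNth j then 1 else 0 := by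
  rw [pMat, Matrix.of_apply, Fin.prod_univ_succAbove _ α, if_pos rfl, one_mul]
  simp only [Fin.succAbove_ne, if_false, Fintype.prod_boole, funext_iff]
  congr 1

theorem mul_pMat_apply (α : Fin (r + 1)) (i j : Fin (r + 1) → Fin n) :
    (A * pMat k n (r + 1) α) i j = ∑ y, A i (α.insertNth y (α.removeNth j)) := by
  rw [Matrix.mul_apply, ← (Fin.insertNthEquiv (fun _ => Fin n) α).sum_comp,
    Fintype.sum_prod_type, Finset.sum_comm]
  simp [Fin.insertNthEquiv, pMat_apply]

theorem pMat_mul_apply (α : Fin (r + 1)) (i j : Fin (r + 1) → Fin n) :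
    (pMat k n (r + 1) α * A) i j = ∑ x, A (α.insertNth x (α.removeNth i)) j := by
  rw [Matrix.mul_apply, ← (Fin.insertNthEquiv (fun _ => Fin n) α).sum_comp,
    Fintype.sum_prod_type, Finset.sum_comm]
  simp [Fin.insertNthEquiv, pMat_apply, eq_comm]

theorem mul_pMat_eq_pMat_mul_iff (α : Fin (r + 1)) :
    A * pMat k n (r + 1) α = pMat k n (r + 1) α * A ↔
      ∀ (p q : Fin r → Fin n) (x y : Fin n),
        ∑ y', A (α.insertNth x p) (α.insertNth y' q) =
          ∑ x', A (α.insertNth x' p) (α.insertNth y q) := by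
  constructor
  · intro h p q x y
    simpa only [mul_pMat_apply, pMat_mul_apply, Fin.removeNth_insertNth] using
      congr_fun₂ h (α.insertNth x p) (α.insertNth y q)
  · intro h
    ext i j
    simpa only [mul_pMat_apply, pMat_mul_apply, Fin.insertNth_self_removeNth] using
      h (α.removeNth i) (α.removeNth j) (i α) (j α)

end pMat

/-- A matrix `A` indexed by `I(n,r)` commutes with `I_n^{⊗(α-1)} ⊗ J_n ⊗ I_n^{⊗(r-α)}`
for every place `α` iff for each `α` and all `p, q ∈ I(n,r-1)` there is a scalar `b`
equal to all the corresponding row and column `α`-slice sums of `A`.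
(Here the positive integer r of the statement is represented as `r+1`.) -/
theorem stmt_1 {k : Type*} [CommRing k] {n r : ℕ} (hn : 0 < n)
    (A : Matrix (Fin (r+1) → Fin n) (Fin (r+1) → Fin n) k) :
    (∀ α : Fin (r+1), A * pMat k n (r+1) α = pMat k n (r+1) α * A) ↔
      (∀ (α : Fin (r+1)) (p q : Fin r → Fin n), ∃ b : k,
        (∀ y : Fin n, (∑ x : Fin n, A (α.insertNth x p) (α.insertNth y q)) = b) ∧
        (∀ x : Fin n, (∑ y : Fin n, A (α.insertNth x p) (α.insertNth y q)) = b)) := by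
  have : Nonempty (Fin n) := Fin.pos_iff_nonempty.mp hn
  simp only [mul_pMat_eq_pMat_mul_iff, forall_sum_row_eq_sum_col_iff]
end

section
/- Suppose r ≥ 2 and A = (a^i_j) ∈ E_k(n,r). Then: (a) for any p, q ∈ I(n,r-1), the scalars b^p_q(α) arising from the slice-sum condition (G) are independent of the place α; they all equal a common value b^p_q; and (b) for any p, q ∈ I(n,r-1), the n×n matrix A^p_q = (a^{p i}_{q j})_{i,j = 1,…,n} (entries indexed by appending i to p and j to q) is generalised doubly stochastic with all row and column sums equal to b^p_q. -/
open Finset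

/-- The value-type of a multi-index `i ∈ I(n,r)`, encoded as the equivalence
relation on places whose classes are the blocks `{α : i α = v}`. -/
def vt {n r : ℕ} (i : Fin r → Fin n) : Fin r → Fin r → Prop :=
  fun a b => i a = i b

/-- Condition (G): for each place `α` and each pair of multi-indices obtained by
deleting place `α`, all row and column `α`-slice sums equal a common scalar. -/
def CondG (k : Type*) [CommRing k] (n r : ℕ)
    (A : Matrix (Fin r → Fin n) (Fin r → Fin n) k) : Prop :=
  ∀ (α : Fin r) (i j : Fin r → Fin n), ∃ b : k,
    (∀ y : Fin n, (∑ x : Fin n, A (Function.update i α x) (Function.update j α y)) = b) ∧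
    (∀ x : Fin n, (∑ y : Fin n, A (Function.update i α x) (Function.update j α y)) = b)

/-- Condition (H): entries vanish when row and column indices have different value-types. -/
def CondH (k : Type*) [CommRing k] (n r : ℕ)
    (A : Matrix (Fin r → Fin n) (Fin r → Fin n) k) : Prop :=
  ∀ i j : Fin r → Fin n, vt i ≠ vt j → A i j = 0

/-- Condition (S): invariance under simultaneous place permutation of rows and columns. -/
def CondS (k : Type*) [CommRing k] (n r : ℕ)
    (A : Matrix (Fin r → Fin n) (Fin r → Fin n) k) : Prop :=
  ∀ (σ : Equiv.Perm (Fin r)) (i j : Fin r → Fin n), A (i ∘ σ) (j ∘ σ) = A i j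

/-- Membership in the centralizer algebra `E_k(n,r) = End_{P_r(n)}(V^{⊗r})`. -/
def MemE (k : Type*) [CommRing k] (n r : ℕ)
    (A : Matrix (Fin r → Fin n) (Fin r → Fin n) k) : Prop :=
  CondG k n r A ∧ CondH k n r A ∧ CondS k n r A

/-- The restriction `ρ(A) ∈ Mat_{I(n,r-1)}(k)`: its `(p,q)`-entry is the slice sum
`Σ_x a^{p x}_{q 0}`, which for `A ∈ E_k(n,r)` is the common value of all slice
sums of `A` indexed by `p, q`. -/
def rho (k : Type*) [CommRing k] (n r : ℕ) [NeZero n]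
    (A : Matrix (Fin (r+1) → Fin n) (Fin (r+1) → Fin n) k) :
    Matrix (Fin r → Fin n) (Fin r → Fin n) k :=
  Matrix.of fun p q => ∑ x : Fin n, A (Fin.snoc p x) (Fin.snoc q 0)

/-- The `k`-module `E_k(n,r)^i_j` of special invariants: those `A ∈ E_k(n,r)` such
that `A s t ≠ 0` implies `Λ_i(s) = Λ_j(t)`. -/
def MemESpec (k : Type*) [CommRing k] (n r : ℕ) (i j : Fin n)
    (A : Matrix (Fin r → Fin n) (Fin r → Fin n) k) : Prop :=
  MemE k n r A ∧ ∀ s t : Fin r → Fin n, A s t ≠ 0 → ∀ α : Fin r, s α = i ↔ t α = j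

/-- The `r`-th Kronecker power `P(w)^{⊗r}` of the permutation matrix of `w`. -/
def kron (k : Type*) [CommRing k] (n r : ℕ) (w : Equiv.Perm (Fin n)) :
    Matrix (Fin r → Fin n) (Fin r → Fin n) k :=
  Matrix.of fun i j => if i = ⇑w ∘ j then 1 else 0

/- Condition (S) lets the place permutation `α.cycleRange` move any place `α` to the front, so
every slice of `A` through a place `α` equals the slice through place `0`; condition (G) at a
single place then provides the common line sum `b^p_q` of all of them. -/

def Matrix.IsGDS {ι k : Type*} [Fintype ι] [AddCommMonoid k] (M : Matrix ι ι k) (s : k) :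
    Prop :=
  (∀ i, ∑ j, M i j = s) ∧ ∀ j, ∑ i, M i j = s

/-- For `α = Fin.last r` this is the block `A^p_q` of the statement. -/
def Matrix.slice {k : Type*} {n r : ℕ} (A : Matrix (Fin (r+1) → Fin n) (Fin (r+1) → Fin n) k)
    (α : Fin (r+1)) (p q : Fin r → Fin n) : Matrix (Fin n) (Fin n) k :=
  Matrix.of fun x y => A (α.insertNth x p) (α.insertNth y q)

section Slices

variable {k : Type*} [CommRing k] {n r : ℕ}
  {A : Matrix (Fin (r+1) → Fin n) (Fin (r+1) → Fin n) k}

lemma CondS.slice_eq_slice_zero (hS : CondS k n (r+1) A) (α : Fin (r+1)) (p q : Fin r → Fin n) :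
    A.slice α p q = A.slice 0 p q := by
  ext x y
  rw [Matrix.slice, Matrix.slice, Matrix.of_apply, Matrix.of_apply, ← hS α.cycleRange.symm,
    Fin.insertNth_comp_cycleRange_symm, Fin.insertNth_comp_cycleRange_symm, Fin.insertNth_zero',
    Fin.insertNth_zero']

lemma CondG.exists_isGDS_slice [Nonempty (Fin n)] (hG : CondG k n (r+1) A) (α : Fin (r+1))
    (p q : Fin r → Fin n) : ∃ b, (A.slice α p q).IsGDS b := by
  obtain ⟨b, hcol, hrow⟩ := hG α (α.insertNth (Classical.arbitrary _) p)
    (α.insertNth (Classical.arbitrary _) q)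
  simp only [Fin.update_insertNth] at hcol hrow
  exact ⟨b, hrow, hcol⟩

lemma MemE.exists_forall_isGDS_slice [Nonempty (Fin n)] (hA : MemE k n (r+1) A)
    (p q : Fin r → Fin n) : ∃ b, ∀ α, (A.slice α p q).IsGDS b := by
  obtain ⟨hG, -, hS⟩ := hA
  obtain ⟨b, hb⟩ := hG.exists_isGDS_slice 0 p q
  exact ⟨b, fun α => hS.slice_eq_slice_zero α p q ▸ hb⟩

end Slices

theorem stmt_3_general {k : Type*} [CommRing k] {n r : ℕ}
    (A : Matrix (Fin (r+2) → Fin n) (Fin (r+2) → Fin n) k)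
    (hA : MemE k n (r+2) A) :
    ∀ p q : Fin (r+1) → Fin n, ∃ b : k,
      (∀ (α : Fin (r+2)) (y : Fin n),
        (∑ x : Fin n, A (α.insertNth x p) (α.insertNth y q)) = b) ∧
      (∀ (α : Fin (r+2)) (x : Fin n),
        (∑ y : Fin n, A (α.insertNth x p) (α.insertNth y q)) = b) ∧
      (∀ x : Fin n, (∑ y : Fin n, A (Fin.snoc p x) (Fin.snoc q y)) = b) ∧
      (∀ y : Fin n, (∑ x : Fin n, A (Fin.snoc p x) (Fin.snoc q y)) = b) := by
  intro p q
  have : Nonempty (Fin n) := ⟨p 0⟩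
  obtain ⟨b, hb⟩ := hA.exists_forall_isGDS_slice p q
  have hlast := hb (Fin.last _)
  simp only [Matrix.IsGDS, Matrix.slice, Matrix.of_apply, Fin.insertNth_last'] at hlast
  exact ⟨b, fun α => (hb α).2, fun α => (hb α).1, hlast⟩

/-- For `r ≥ 2` (represented as `r+2`) and `A ∈ E_k(n,r)`: (a) the slice-sum scalars
of condition (G) are independent of the place `α`, all equal to a common value
`b^p_q`; and (b) for any `p, q ∈ I(n,r-1)`, the n×n block `(a^{p x}_{q y})_{x,y}`
is generalised doubly stochastic with all row and column sums equal to `b^p_q`. -/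
theorem stmt_3 {k : Type*} [CommRing k] {n r : ℕ} (hn : 0 < n)
    (A : Matrix (Fin (r+2) → Fin n) (Fin (r+2) → Fin n) k)
    (hA : MemE k n (r+2) A) :
    ∀ p q : Fin (r+1) → Fin n, ∃ b : k,
      (∀ (α : Fin (r+2)) (y : Fin n),
        (∑ x : Fin n, A (α.insertNth x p) (α.insertNth y q)) = b) ∧
      (∀ (α : Fin (r+2)) (x : Fin n),
        (∑ y : Fin n, A (α.insertNth x p) (α.insertNth y q)) = b) ∧
      (∀ x : Fin n, (∑ y : Fin n, A (Fin.snoc p x) (Fin.snoc q y)) = b) ∧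
      (∀ y : Fin n, (∑ x : Fin n, A (Fin.snoc p x) (Fin.snoc q y)) = b) :=
  stmt_3_general A hA
end

section
/- Suppose r ≥ 2 and A = (a^i_j) ∈ E_k(n,r). If i = i_1⋯i_r and j = j_1⋯j_r are in I(n,r) with vt(i) = vt(j), and the value i_r appears in some place of p = i_1⋯i_{r-1}, then j_r appears in the same place of q = j_1⋯j_{r-1}, and a^i_j = b^p_q, the common value of the slice sums of A indexed by p, q. -/
open Finset

/- Proof idea: with `α` the last place, condition (H) kills every term of the column slice sum
`Σ_y a^i_{j[α ↦ y]}` except `y = j_α`, because `i` repeats its value at places `β` and `α` and so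
`j[α ↦ y]` must do the same. That slice sum is therefore `a^i_j`, and by (G) it equals the row slice
sums `b`. -/

theorem Fin.snoc_comp_castSucc_eq_update {α : Type*} {m : ℕ} (f : Fin (m + 1) → α) (x : α) :
    (Fin.snoc (f ∘ Fin.castSucc) x : Fin (m + 1) → α) = Function.update f (Fin.last m) x := by
  conv_rhs => rw [← Fin.snoc_init_self f, Fin.update_snoc_last]
  rfl

theorem apply_eq_apply_iff_of_vt_eq {n r : ℕ} {i j : Fin r → Fin n} (h : vt i = vt j)
    (a b : Fin r) : i a = i b ↔ j a = j b :=
  Iff.of_eq (congrFun (congrFun h a) b)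

section Slices

variable {k : Type*} [CommRing k] {n r : ℕ} {A : Matrix (Fin r → Fin n) (Fin r → Fin n) k}

theorem CondG.sum_update_right_eq {b : k} (hG : CondG k n r A) {α : Fin r}
    {i j : Fin r → Fin n} (hb : ∀ y, ∑ x, A (Function.update i α x) (Function.update j α y) = b)
    (x : Fin n) : ∑ y, A (Function.update i α x) (Function.update j α y) = b := by
  obtain ⟨b', hrow, hcol⟩ := hG α i j
  rw [hcol x, ← hrow x, hb x]

theorem CondH.sum_update_right_eq_self (hH : CondH k n r A) {i j : Fin r → Fin n}
    (hvt : vt i = vt j) {α β : Fin r} (hβα : β ≠ α) (hi : i β = i α) :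
    ∑ y, A i (Function.update j α y) = A i j := by
  rw [Finset.sum_eq_single_of_mem (j α) (Finset.mem_univ _) ?_, Function.update_eq_self]
  intro y _ hy
  refine hH _ _ fun hvt' => hy ?_
  have hj := (apply_eq_apply_iff_of_vt_eq hvt β α).1 hi
  have hy' := (apply_eq_apply_iff_of_vt_eq hvt' β α).1 hi
  rwa [Function.update_of_ne hβα, Function.update_self, hj, eq_comm] at hy'

theorem apply_eq_of_sum_update_eq (hG : CondG k n r A) (hH : CondH k n r A)
    {i j : Fin r → Fin n} (hvt : vt i = vt j) {α β : Fin r} (hβα : β ≠ α) (hi : i β = i α)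
    {b : k} (hb : ∀ y, ∑ x, A (Function.update i α x) (Function.update j α y) = b) :
    A i j = b := by
  rw [← hH.sum_update_right_eq_self hvt hβα hi, ← hG.sum_update_right_eq hb (i α),
    Function.update_eq_self]

end Slices

theorem stmt_4_general {k : Type*} [CommRing k] {n r : ℕ}
    (A : Matrix (Fin (r+2) → Fin n) (Fin (r+2) → Fin n) k)
    (hA : MemE k n (r+2) A)
    (i j : Fin (r+2) → Fin n) (hvt : vt i = vt j)
    (β : Fin (r+1)) (hβ : i β.castSucc = i (Fin.last (r+1))) :
    j β.castSucc = j (Fin.last (r+1)) ∧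
      ∀ b : k,
        (∀ y : Fin n,
          (∑ x : Fin n,
            A (Fin.snoc (i ∘ Fin.castSucc) x) (Fin.snoc (j ∘ Fin.castSucc) y)) = b) →
        A i j = b := by
  refine ⟨(apply_eq_apply_iff_of_vt_eq hvt _ _).1 hβ, fun b hb => ?_⟩
  simp only [Fin.snoc_comp_castSucc_eq_update] at hb
  exact apply_eq_of_sum_update_eq hA.1 hA.2.1 hvt (Fin.castSucc_lt_last β).ne hβ hb

/-- For `r ≥ 2` (represented as `r+2`) and `A ∈ E_k(n,r)`: if `vt i = vt j` and the
last value `i_r` appears at some place `β` of `p = i_1⋯i_{r-1}`, then `j_r` appears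
at the same place `β` of `q = j_1⋯j_{r-1}`, and `a^i_j` equals the common value
`b^p_q` of the slice sums of `A` indexed by `p, q`. -/
theorem stmt_4 {k : Type*} [CommRing k] {n r : ℕ} (hn : 0 < n)
    (A : Matrix (Fin (r+2) → Fin n) (Fin (r+2) → Fin n) k)
    (hA : MemE k n (r+2) A)
    (i j : Fin (r+2) → Fin n) (hvt : vt i = vt j)
    (β : Fin (r+1)) (hβ : i β.castSucc = i (Fin.last (r+1))) :
    j β.castSucc = j (Fin.last (r+1)) ∧
      ∀ b : k,
        (∀ y : Fin n,
          (∑ x : Fin n,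
            A (Fin.snoc (i ∘ Fin.castSucc) x) (Fin.snoc (j ∘ Fin.castSucc) y)) = b) →
        A i j = b :=
  stmt_4_general A hA i j hvt β hβ
end

section
/- Let r ≥ 1 and suppose A ∈ E_k(n,r). Then the restriction ρ(A) belongs to E_k(n,r-1); thus ρ is a k-linear map from E_k(n,r) into E_k(n,r-1) (with E_k(n,0) = k). -/
open Finset

/-!
Each defining condition passes from `A` to `ρ(A)` separately. A slice sum of `ρ(A)` at place `α`
is, after exchanging the two sums, a sum over the last place of slice sums of `A` at place `α`,
whose values by (G) do not depend on the free index. Condition (H) holds termwise, because the value-type of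
`snoc p x` restricts to that of `p`; condition (S) holds termwise, by extending a permutation of
the first `r` places to one fixing the last place.
-/

lemma vt_eq_of_vt_snoc_eq {n r : ℕ} {p q : Fin r → Fin n} {x y : Fin n}
    (h : vt (Fin.snoc p x : Fin (r+1) → Fin n) = vt (Fin.snoc q y : Fin (r+1) → Fin n)) :
    vt p = vt q := by
  funext a c
  simpa [vt, Fin.snoc_castSucc] using congrFun (congrFun h a.castSucc) c.castSucc

lemma snoc_comp_viaFintypeEmbedding_castSucc {α : Type*} {r : ℕ} (p : Fin r → α) (x : α)
    (σ : Equiv.Perm (Fin r)) :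
    (Fin.snoc p x : Fin (r+1) → α) ∘ σ.viaFintypeEmbedding Fin.castSuccEmb =
      Fin.snoc (p ∘ σ) x := by
  funext a
  induction a using Fin.lastCases with
  | last =>
    rw [Function.comp_apply, Equiv.Perm.viaFintypeEmbedding_apply_notMem_range]
    · simp
    · simp [Fin.range_castSucc]
  | cast i =>
    have := σ.viaFintypeEmbedding_apply_image Fin.castSuccEmb i
    simp only [Fin.coe_castSuccEmb] at this
    simp [this]

section Restriction

variable {k : Type*} [CommRing k] {n r : ℕ} [NeZero n]

lemma rho_apply (A : Matrix (Fin (r+1) → Fin n) (Fin (r+1) → Fin n) k) (p q : Fin r → Fin n) :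
    rho k n r A p q = ∑ x : Fin n, A (Fin.snoc p x) (Fin.snoc q 0) :=
  rfl

lemma rho_update_apply (A : Matrix (Fin (r+1) → Fin n) (Fin (r+1) → Fin n) k)
    (α : Fin r) (p q : Fin r → Fin n) (x y : Fin n) :
    rho k n r A (Function.update p α x) (Function.update q α y) =
      ∑ z : Fin n, A (Function.update (Fin.snoc p z) α.castSucc x)
        (Function.update (Fin.snoc q 0) α.castSucc y) := by
  simp only [rho_apply, Fin.snoc_update]

lemma condG_rho {A : Matrix (Fin (r+1) → Fin n) (Fin (r+1) → Fin n) k}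
    (hG : CondG k n (r+1) A) : CondG k n r (rho k n r A) := by
  choose b hrow hcol using hG
  intro α p q
  refine ⟨∑ z : Fin n, b α.castSucc (Fin.snoc p z) (Fin.snoc q 0), fun y => ?_, fun x => ?_⟩
  · simp only [rho_update_apply]
    rw [Finset.sum_comm]
    exact Finset.sum_congr rfl fun z _ => hrow _ _ _ y
  · simp only [rho_update_apply]
    rw [Finset.sum_comm]
    exact Finset.sum_congr rfl fun z _ => hcol _ _ _ x

lemma condH_rho {A : Matrix (Fin (r+1) → Fin n) (Fin (r+1) → Fin n) k}
    (hH : CondH k n (r+1) A) : CondH k n r (rho k n r A) :=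
  fun p q hpq => (rho_apply A p q).trans <|
    Finset.sum_eq_zero fun _ _ => hH _ _ fun h => hpq (vt_eq_of_vt_snoc_eq h)

lemma condS_rho {A : Matrix (Fin (r+1) → Fin n) (Fin (r+1) → Fin n) k}
    (hS : CondS k n (r+1) A) : CondS k n r (rho k n r A) := by
  intro σ p q
  simp only [rho_apply]
  refine Finset.sum_congr rfl fun x _ => ?_
  rw [← snoc_comp_viaFintypeEmbedding_castSucc p x σ,
    ← snoc_comp_viaFintypeEmbedding_castSucc q 0 σ]
  exact hS _ _ _

end Restriction

/-- For `r ≥ 1` (represented as `r+1`) and `A ∈ E_k(n,r)`, the restriction `ρ(A)`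
belongs to `E_k(n,r-1)`; thus `ρ` is a k-linear map `E_k(n,r) → E_k(n,r-1)`. -/
theorem stmt_5 {k : Type*} [CommRing k] {n r : ℕ} [NeZero n]
    (A : Matrix (Fin (r+1) → Fin n) (Fin (r+1) → Fin n) k)
    (hA : MemE k n (r+1) A) :
    MemE k n r (rho k n r A) :=
  ⟨condG_rho hA.1, condH_rho hA.2.1, condS_rho hA.2.2⟩
end

section
/- Suppose r ≥ 1 and A ∈ E_k(n,r), regarded as an n×n block matrix A = (A^p_q). If, for some fixed 1 ≤ i,j ≤ n, all blocks in the i-th block row and in the j-th block column of A other than A^i_j are zero, then A is a special invariant in E_k(n,r)^i_j. -/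
open Finset

/- A vanishing block `A^p_q` only constrains the first place, but by (S) the transposition
`(0 α)` moves any place `α` to the front. -/
theorem CondS.apply_eq_zero_of_block_eq_zero {k : Type*} [CommRing k] {n r : ℕ}
    {A : Matrix (Fin (r+1) → Fin n) (Fin (r+1) → Fin n) k} (hS : CondS k n (r+1) A)
    {p q : Fin n} (hblock : ∀ s t : Fin r → Fin n, A (Fin.cons p s) (Fin.cons q t) = 0)
    {s t : Fin (r+1) → Fin n} {α : Fin (r+1)} (hs : s α = p) (ht : t α = q) :
    A s t = 0 := by
  set σ := Equiv.swap (0 : Fin (r+1)) α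
  have hs₀ : (s ∘ σ) 0 = p := by simp [σ, hs]
  have ht₀ : (t ∘ σ) 0 = q := by simp [σ, ht]
  rw [← hS σ, ← Fin.cons_self_tail (s ∘ σ), ← Fin.cons_self_tail (t ∘ σ), hs₀, ht₀]
  exact hblock _ _

/-- For `r ≥ 1` (represented as `r+1`) and `A ∈ E_k(n,r)` regarded as an n×n block
matrix: if all blocks in the `i`-th block row and in the `j`-th block column other
than the block `A^i_j` are zero, then `A` is a special invariant in `E_k(n,r)^i_j`. -/
theorem stmt_7 {k : Type*} [CommRing k] {n r : ℕ}
    (A : Matrix (Fin (r+1) → Fin n) (Fin (r+1) → Fin n) k)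
    (hA : MemE k n (r+1) A) (i j : Fin n)
    (hrow : ∀ q : Fin n, q ≠ j → ∀ s t : Fin r → Fin n,
      A (Fin.cons i s) (Fin.cons q t) = 0)
    (hcol : ∀ p : Fin n, p ≠ i → ∀ s t : Fin r → Fin n,
      A (Fin.cons p s) (Fin.cons j t) = 0) :
    MemESpec k n (r+1) i j A := by
  refine ⟨hA, fun s t hst α => ⟨fun hs => ?_, fun ht => ?_⟩⟩
  · by_contra ht
    exact hst (hA.2.2.apply_eq_zero_of_block_eq_zero (hrow _ ht) hs rfl)
  · by_contra hs
    exact hst (hA.2.2.apply_eq_zero_of_block_eq_zero (hcol _ hs) rfl ht)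
end

section
/- Suppose r ≥ 1 and A ∈ E_k(n,r). For any fixed 1 ≤ i,j ≤ n, the block A^i_j = (a^{i i_2⋯i_r}_{j j_2⋯j_r}), after re-indexing its rows and columns by the forgetful map omitting the initial term of each multi-index, belongs to E_k(n,r-1)^i_j. -/
open Finset

/-!
Conditions (G), (H), (S) for the block `A^i_j` are those of `A` at the places `α.succ` and for
the permutations fixing `0`. A nonzero entry `a^{i s}_{j t}` forces `vt (i s) = vt (j t)` by (H),
and comparing place `0` with place `α.succ` there gives `Λ_i(s) = Λ_j(t)`.
-/

def subblock {k : Type*} {n r : ℕ} (A : Matrix (Fin (r+1) → Fin n) (Fin (r+1) → Fin n) k)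
    (i j : Fin n) : Matrix (Fin r → Fin n) (Fin r → Fin n) k :=
  Matrix.of fun s t => A (Fin.cons i s) (Fin.cons j t)

@[simp]
theorem subblock_apply {k : Type*} {n r : ℕ}
    (A : Matrix (Fin (r+1) → Fin n) (Fin (r+1) → Fin n) k) (i j : Fin n)
    (s t : Fin r → Fin n) : subblock A i j s t = A (Fin.cons i s) (Fin.cons j t) :=
  rfl

section Block

variable {k : Type*} [CommRing k] {n r : ℕ}
  {A : Matrix (Fin (r+1) → Fin n) (Fin (r+1) → Fin n) k}

theorem Fin.cons_comp_decomposeFin_symm_zero {α : Type*} (x : α) (s : Fin r → α)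
    (σ : Equiv.Perm (Fin r)) :
    (Fin.cons x s : Fin (r+1) → α) ∘ Equiv.Perm.decomposeFin.symm (0, σ) =
      Fin.cons x (s ∘ σ) := by
  funext a
  refine Fin.cases ?_ (fun b => ?_) a <;>
    simp [Equiv.Perm.decomposeFin_symm_apply_zero, Equiv.Perm.decomposeFin_symm_apply_succ]

theorem vt_cons_iff {x y : Fin n} {s t : Fin r → Fin n}
    (h : vt (Fin.cons x s) = vt (Fin.cons y t)) (α : Fin r) : s α = x ↔ t α = y := by
  simpa [vt] using congrFun (congrFun h α.succ) 0

theorem CondG.subblock (hG : CondG k n (r+1) A) (i j : Fin n) : CondG k n r (subblock A i j) := by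
  intro α p q
  obtain ⟨b, hrow, hcol⟩ := hG α.succ (Fin.cons i p) (Fin.cons j q)
  refine ⟨b, fun y => ?_, fun x => ?_⟩
  · simpa [← Fin.cons_update] using hrow y
  · simpa [← Fin.cons_update] using hcol x

theorem CondH.subblock (hH : CondH k n (r+1) A) (i j : Fin n) : CondH k n r (subblock A i j) := by
  intro s t hst
  refine hH _ _ fun hcons => hst ?_
  funext a b
  simpa [vt] using congrFun (congrFun hcons a.succ) b.succ

theorem CondS.subblock (hS : CondS k n (r+1) A) (i j : Fin n) : CondS k n r (subblock A i j) := by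
  intro σ s t
  simpa [Fin.cons_comp_decomposeFin_symm_zero] using
    hS (Equiv.Perm.decomposeFin.symm (0, σ)) (Fin.cons i s) (Fin.cons j t)

theorem CondH.eq_iff_eq_of_cons_ne_zero (hH : CondH k n (r+1) A) {i j : Fin n}
    {s t : Fin r → Fin n} (hst : A (Fin.cons i s) (Fin.cons j t) ≠ 0) (α : Fin r) :
    s α = i ↔ t α = j :=
  vt_cons_iff (not_not.mp fun hvt => hst (hH _ _ hvt)) α

end Block

/-- For `r ≥ 1` (represented as `r+1`) and `A ∈ E_k(n,r)`, each block `A^i_j`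
(re-indexed by the forgetful map omitting the initial term of each multi-index)
belongs to `E_k(n,r-1)^i_j`. -/
theorem stmt_8 {k : Type*} [CommRing k] {n r : ℕ}
    (A : Matrix (Fin (r+1) → Fin n) (Fin (r+1) → Fin n) k)
    (hA : MemE k n (r+1) A) (i j : Fin n) :
    MemESpec k n r i j
      (Matrix.of fun s t : Fin r → Fin n => A (Fin.cons i s) (Fin.cons j t)) := by
  obtain ⟨hG, hH, hS⟩ := hA
  exact ⟨⟨hG.subblock i j, hH.subblock i j, hS.subblock i j⟩,
    fun _ _ => hH.eq_iff_eq_of_cons_ne_zero⟩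
end

section
/- Let r ≥ 1 and let A ∈ E_k(n,r)^i_j be a special invariant, regarded as an n×n block matrix. Then: (a) A^i_q = 0 for every q ≠ j and A^p_j = 0 for every p ≠ i; and (c) the restriction satisfies ρ(A) = A^i_j, and consequently ρ(A) belongs to E_k(n,r-1)^i_j. -/
open Finset

/-- For `r ≥ 1` (represented as `r+1`) and a special invariant `A ∈ E_k(n,r)^i_j`:
(a) all blocks `A^i_q` (`q ≠ j`) and `A^p_j` (`p ≠ i`) vanish; and (c) the
restriction satisfies `ρ(A) = A^i_j`, and consequently `ρ(A) ∈ E_k(n,r-1)^i_j`. -/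
theorem stmt_10 {k : Type*} [CommRing k] {n r : ℕ} [NeZero n]
    (i j : Fin n)
    (A : Matrix (Fin (r+1) → Fin n) (Fin (r+1) → Fin n) k)
    (hA : MemESpec k n (r+1) i j A) :
    (∀ q : Fin n, q ≠ j → ∀ s t : Fin r → Fin n,
        A (Fin.cons i s) (Fin.cons q t) = 0) ∧
    (∀ p : Fin n, p ≠ i → ∀ s t : Fin r → Fin n,
        A (Fin.cons p s) (Fin.cons j t) = 0) ∧
    rho k n r A =
      Matrix.of (fun s t : Fin r → Fin n => A (Fin.cons i s) (Fin.cons j t)) ∧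
    MemESpec k n r i j (rho k n r A) := by
  obtain ⟨⟨hG, hH, hS⟩, hSpec⟩ := hA
  -- part (a), first half
  have ha1 : ∀ q : Fin n, q ≠ j → ∀ s t : Fin r → Fin n,
      A (Fin.cons i s) (Fin.cons q t) = 0 := by
    intro q hq s t
    by_contra h
    have := hSpec _ _ h 0
    simp only [Fin.cons_zero] at this
    exact hq (this.mp trivial)
  have ha2 : ∀ p : Fin n, p ≠ i → ∀ s t : Fin r → Fin n,
      A (Fin.cons p s) (Fin.cons j t) = 0 := by
    intro p hp s t
    by_contra h
    have := hSpec _ _ h 0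
    simp only [Fin.cons_zero] at this
    exact hp (this.mpr trivial)
  -- rotating snoc to cons
  have hrot : ∀ (c : Fin n) (s : Fin r → Fin n),
      (Fin.snoc s c : Fin (r+1) → Fin n) ∘ ⇑(finRotate (r+1))⁻¹ = Fin.cons c s := by
    intro c s
    funext x
    rcases Fin.eq_zero_or_eq_succ x with rfl | ⟨α, rfl⟩
    · have h0 : (finRotate (r+1))⁻¹ (0 : Fin (r+1)) = Fin.last r := by
        rw [Equiv.Perm.inv_eq_iff_eq]
        exact finRotate_last.symm
      rw [Function.comp_apply, h0]; simp
    · have h1 : (finRotate (r+1))⁻¹ α.succ = α.castSucc := by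
        rw [Equiv.Perm.inv_eq_iff_eq]
        rw [finRotate_succ_apply, Fin.coeSucc_eq_succ]
      rw [Function.comp_apply, h1]; simp
  -- key pointwise identity
  have hkey : ∀ s t : Fin r → Fin n,
      rho k n r A s t = A (Fin.cons i s) (Fin.cons j t) := by
    intro s t
    obtain ⟨b, hb1, _⟩ := hG (Fin.last r) (Fin.snoc s 0) (Fin.snoc t 0)
    have e1 : rho k n r A s t = b := by
      simpa [rho, Fin.update_snoc_last] using hb1 0
    have e2 : (∑ x : Fin n, A (Fin.snoc s x) (Fin.snoc t j)) = b := by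
      simpa [Fin.update_snoc_last] using hb1 j
    have e3 : (∑ x : Fin n, A (Fin.snoc s x) (Fin.snoc t j))
        = A (Fin.snoc s i) (Fin.snoc t j) := by
      refine Finset.sum_eq_single i ?_ (by simp)
      intro x _ hx
      by_contra h
      have := hSpec _ _ h (Fin.last r)
      simp only [Fin.snoc_last] at this
      exact hx (this.mpr trivial)
    have e4 : A (Fin.snoc s i) (Fin.snoc t j) = A (Fin.cons i s) (Fin.cons j t) := by
      rw [← hrot i s, ← hrot j t]
      exact (hS _ _ _).symm
    rw [e1, ← e2, e3, e4]
  -- cons and update commute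
  have hcu : ∀ (c x : Fin n) (s : Fin r → Fin n) (α : Fin r),
      (Fin.cons c (Function.update s α x) : Fin (r+1) → Fin n)
        = Function.update (Fin.cons c s) α.succ x := by
    intro c x s α
    funext y
    rcases Fin.eq_zero_or_eq_succ y with rfl | ⟨β, rfl⟩
    · simp [Function.update_apply, (Fin.succ_ne_zero α).symm]
    · simp [Function.update_apply, Fin.succ_inj]
  -- cons and permutation
  have hconsPerm : ∀ (σ : Equiv.Perm (Fin r)) (c : Fin n) (s : Fin r → Fin n),
      (Fin.cons c (s ∘ σ) : Fin (r+1) → Fin n)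
        = (Fin.cons c s : Fin (r+1) → Fin n) ∘
            ⇑((finSuccEquiv r).symm.permCongr σ.optionCongr) := by
    intro σ c s
    funext x
    rcases Fin.eq_zero_or_eq_succ x with rfl | ⟨α, rfl⟩
    · simp [Equiv.permCongr_apply]
    · simp [Equiv.permCongr_apply]
  have hrho : rho k n r A =
      Matrix.of (fun s t : Fin r → Fin n => A (Fin.cons i s) (Fin.cons j t)) := by
    ext s t
    exact hkey s t
  refine ⟨ha1, ha2, hrho, ⟨⟨?_, ?_, ?_⟩, ?_⟩⟩
  · -- CondG
    intro α s t
    obtain ⟨b, hb1, hb2⟩ := hG α.succ (Fin.cons i s) (Fin.cons j t)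
    refine ⟨b, fun y => ?_, fun x => ?_⟩
    · simpa [hkey, hcu] using hb1 y
    · simpa [hkey, hcu] using hb2 x
  · -- CondH
    intro s t hvt
    rw [hkey]
    by_contra h
    apply hvt
    have hvc : vt (Fin.cons i s : Fin (r+1) → Fin n) = vt (Fin.cons j t) := by
      by_contra hne
      exact h (hH _ _ hne)
    funext a b
    have h1 := congrFun (congrFun hvc a.succ) b.succ
    simp only [vt, Fin.cons_succ] at h1 ⊢
    exact h1
  · -- CondS
    intro σ s t
    rw [hkey, hkey, hconsPerm σ i s, hconsPerm σ j t]
    exact hS _ _ _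
  · -- specialness
    intro s t h α
    rw [hkey] at h
    have := hSpec _ _ h α.succ
    simpa [Fin.cons_succ] using this
end

section
/- Suppose n ≤ r. Then: (a) extensions are unique, i.e. if A, A' ∈ E_k(n,r) satisfy ρ(A) = ρ(A') then A = A'; equivalently (b) the restriction map ρ: E_k(n,r) → E_k(n,r-1) is injective; and (c) the zero matrix is the only element of E_k(n,r) whose restriction is zero. -/
open Finset

/-!
If `A ∈ E_k(n,r)` has `ρ(A) = 0`, then every slice sum of `A` vanishes: by (S) any place can be
moved to the last one, where (G) identifies the slice sums with entries of `ρ(A)`.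
When `n ≤ r`, every `i ∈ I(n,r)` has a place `α` at which any change of value changes the
value-type: a place carrying a repeated value, or, if `i` is injective (hence a bijection), any
place. By (H) the slice sum through `(i, j)` at `α` then has the single term `a^i_j`, so `A = 0`.
Injectivity of `ρ` follows by linearity.
-/

lemma Fin.update_last_eq_snoc_init {α : Type*} {r : ℕ} (g : Fin (r+1) → α) (x : α) :
    Function.update g (Fin.last r) x = Fin.snoc (Fin.init g) x := by
  simpa using Fin.update_snoc_last (p := Fin.init g) (x := g (Fin.last r)) (z := x)

lemma exists_place_vt_update_ne {n m : ℕ} [NeZero m] (hnm : n ≤ m) (i : Fin m → Fin n) :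
    ∃ α : Fin m, ∀ x, x ≠ i α → vt (Function.update i α x) ≠ vt i := by
  by_cases hinj : Function.Injective i
  · have hmn : m ≤ n := by simpa using Fintype.card_le_of_injective i hinj
    have hsurj : Function.Surjective i :=
      ((Fintype.bijective_iff_injective_and_card i).2 ⟨hinj, by simp; omega⟩).2
    refine ⟨0, fun x hx hvt => ?_⟩
    obtain ⟨γ, rfl⟩ := hsurj x
    have hγ : γ ≠ 0 := by rintro rfl; exact hx rfl
    have h : i 0 = i γ := by simpa [vt, Function.update_of_ne hγ] using congrFun₂ hvt 0 γ
    exact hx h.symm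
  · obtain ⟨a, b, hab, hne⟩ := Function.not_injective_iff.mp hinj
    refine ⟨a, fun x hx hvt => ?_⟩
    have h : x = i b := by simpa [vt, Function.update_of_ne hne.symm, hab] using congrFun₂ hvt a b
    exact hx (h.trans hab.symm)

section Slices

variable {k : Type*} [CommRing k] {n r : ℕ} [NeZero n]
  {A : Matrix (Fin (r+1) → Fin n) (Fin (r+1) → Fin n) k}

lemma CondG.sum_snoc_eq_rho (hG : CondG k n (r+1) A) (p q : Fin r → Fin n) (y : Fin n) :
    ∑ x, A (Fin.snoc p x) (Fin.snoc q y) = rho k n r A p q := by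
  obtain ⟨b, hb, -⟩ := hG (Fin.last r) (Fin.snoc p 0) (Fin.snoc q 0)
  simp only [Fin.update_snoc_last] at hb
  rw [hb y, rho, Matrix.of_apply, hb 0]

lemma MemE.sum_update_eq_rho (hA : MemE k n (r+1) A) (α : Fin (r+1)) (i j : Fin (r+1) → Fin n)
    (y : Fin n) :
    ∑ x, A (Function.update i α x) (Function.update j α y) =
      rho k n r A (Fin.init (i ∘ Equiv.swap α (Fin.last r)))
        (Fin.init (j ∘ Equiv.swap α (Fin.last r))) := by
  set σ := Equiv.swap α (Fin.last r)
  have hσ : ∀ (f : Fin (r+1) → Fin n) v,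
      Function.update f α v ∘ σ = Fin.snoc (Fin.init (f ∘ σ)) v := fun f v => by
    rw [← Fin.update_last_eq_snoc_init, Function.update_comp_equiv]
    simp [σ, Equiv.symm_swap]
  rw [← hA.1.sum_snoc_eq_rho _ _ y]
  refine Finset.sum_congr rfl fun x _ => ?_
  rw [← hA.2.2 σ, hσ, hσ]

lemma MemE.eq_zero_of_rho_eq_zero (hnr : n ≤ r + 1) (hA : MemE k n (r+1) A)
    (h0 : rho k n r A = 0) : A = 0 := by
  ext i j
  by_cases hij : vt i = vt j
  · obtain ⟨α, hα⟩ := exists_place_vt_update_ne hnr i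
    have hslice := hA.sum_update_eq_rho α i j (j α)
    rw [h0, Function.update_eq_self, Finset.sum_eq_single (i α), Function.update_eq_self] at hslice
    · exact hslice
    · exact fun x _ hx => hA.2.1 _ _ (hij ▸ hα x hx)
    · exact fun h => (h (Finset.mem_univ _)).elim
  · exact hA.2.1 i j hij

end Slices

lemma MemE.sub {k : Type*} [CommRing k] {n r : ℕ} {A B : Matrix (Fin r → Fin n) (Fin r → Fin n) k}
    (hA : MemE k n r A) (hB : MemE k n r B) : MemE k n r (A - B) := by
  obtain ⟨hGA, hHA, hSA⟩ := hA
  obtain ⟨hGB, hHB, hSB⟩ := hB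
  refine ⟨fun α i j => ?_, fun i j h => ?_, fun σ i j => ?_⟩
  · obtain ⟨a, ha1, ha2⟩ := hGA α i j
    obtain ⟨b, hb1, hb2⟩ := hGB α i j
    exact ⟨a - b, fun y => by simp [Finset.sum_sub_distrib, ha1 y, hb1 y],
      fun x => by simp [Finset.sum_sub_distrib, ha2 x, hb2 x]⟩
  · simp [hHA i j h, hHB i j h]
  · simp [hSA σ i j, hSB σ i j]

lemma rho_sub {k : Type*} [CommRing k] {n r : ℕ} [NeZero n]
    (A B : Matrix (Fin (r+1) → Fin n) (Fin (r+1) → Fin n) k) :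
    rho k n r (A - B) = rho k n r A - rho k n r B := by
  ext p q
  simp [rho, Finset.sum_sub_distrib]

/-- Suppose `n ≤ r` (here `r` is represented as `r+1`).  Then extensions are
unique: the restriction `ρ : E_k(n,r) → E_k(n,r-1)` is injective, and `0` is the
only element of `E_k(n,r)` whose restriction is zero. -/
theorem stmt_14 {k : Type*} [CommRing k] {n r : ℕ} [NeZero n] (hnr : n ≤ r + 1) :
    (∀ A B : Matrix (Fin (r+1) → Fin n) (Fin (r+1) → Fin n) k,
        MemE k n (r+1) A → MemE k n (r+1) B → rho k n r A = rho k n r B → A = B) ∧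
    (∀ A : Matrix (Fin (r+1) → Fin n) (Fin (r+1) → Fin n) k,
        MemE k n (r+1) A → rho k n r A = 0 → A = 0) := by
  refine ⟨fun A B hA hB hρ => ?_, fun A hA h0 => hA.eq_zero_of_rho_eq_zero hnr h0⟩
  rw [← sub_eq_zero]
  exact (hA.sub hB).eq_zero_of_rho_eq_zero hnr (by rw [rho_sub, hρ, sub_self])
end
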